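/- Under the same hypotheses as the previous continuity equation (Λ, φ, α C², satisfying the reduced Einstein system, α > 0, (∂xα)² ≠ (∂tα)²), with e and p defined as there, one has ∂t e + ∂x p = 4 sinh²(Λ)((∂tφ)² − (∂xφ)²) + (∂tΛ)² − (∂xΛ)² + ∂x(∂xα/α) − ∂t(∂tα/α). -/

import Mathlib

open Real

noncomputable def pt (f : ℝ → ℝ → ℝ) (t x : ℝ) : ℝ := deriv (fun s => f s x) t

noncomputable def px (f : ℝ → ℝ → ℝ) (t x : ℝ) : ℝ := deriv (fun y => f t y) x

noncomputable def kap (α : ℝ → ℝ → ℝ) (t x : ℝ) : ℝ :=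
  α t x / ((px α t x) ^ 2 - (pt α t x) ^ 2)

noncomputable def h1 (Λ φ α : ℝ → ℝ → ℝ) (t x : ℝ) : ℝ :=
  (px α t x) ^ 2 / (α t x) ^ 2 + (pt α t x) ^ 2 / (α t x) ^ 2
    + (pt Λ t x) ^ 2 + (px Λ t x) ^ 2
    + 4 * Real.sinh (Λ t x) ^ 2 * ((pt φ t x) ^ 2 + (px φ t x) ^ 2)

noncomputable def h2 (Λ φ α : ℝ → ℝ → ℝ) (t x : ℝ) : ℝ :=
  px α t x * pt α t x / (α t x) ^ 2 + pt Λ t x * px Λ t x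
    + 4 * Real.sinh (Λ t x) ^ 2 * (pt φ t x * px φ t x)

noncomputable def eDen (Λ φ α : ℝ → ℝ → ℝ) (t x : ℝ) : ℝ :=
  kap α t x * (pt α t x * h1 Λ φ α t x - 2 * px α t x * h2 Λ φ α t x)

noncomputable def pDen (Λ φ α : ℝ → ℝ → ℝ) (t x : ℝ) : ℝ :=
  kap α t x * (px α t x * h1 Λ φ α t x - 2 * pt α t x * h2 Λ φ α t x)

/-!
Split `h₁ = ((∂ₓα)² + (∂ₜα)²)/α² + E` and `h₂ = ∂ₓα ∂ₜα/α² + M`, where `E = |∂ₜu|² + |∂ₓu|²` and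
`M = ⟨∂ₜu, ∂ₓu⟩` for the map `u = (Λ, φ)` into the hyperbolic plane `dΛ² + 4 sinh²Λ dφ²`. Then
`e = -∂ₜα/α + κ(∂ₜα E - 2∂ₓα M)` and `p = ∂ₓα/α + κ(∂ₓα E - 2∂ₜα M)`, and the α-parts produce the
terms `∂ₓ(∂ₓα/α) - ∂ₜ(∂ₜα/α)`. The equations for `Λ` and `φ` say that `u` is an α-weighted wave map,
which gives `∂ₜE - 2∂ₓM = -2(∂ₜα|∂ₜu|² - ∂ₓα M)/α` and `∂ₓE - 2∂ₜM = 2(∂ₜα M - ∂ₓα|∂ₓu|²)/α`, while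
`□α = 0` gives `∂ₜ(κ∂ₜα) + ∂ₓ(κ∂ₓα) = ((∂ₜα)² + (∂ₓα)²)/D` and `∂ₜ(κ∂ₓα) + ∂ₓ(κ∂ₜα) = 2∂ₜα∂ₓα/D`
with `D = (∂ₓα)² - (∂ₜα)²`. Collecting terms leaves `|∂ₜu|² - |∂ₓu|²`. At a point this is an
identity between 2-jets: the difference of the two sides is a combination of the three field
equations, with the multipliers that this computation produces.
-/

open Function

section PartialDerivatives

variable {f : ℝ → ℝ → ℝ} {t x : ℝ}

theorem hasDerivAt_fderiv_apply_t {F : ℝ × ℝ → ℝ} (hF : DifferentiableAt ℝ F (t, x)) :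
    HasDerivAt (fun s => F (s, x)) (fderiv ℝ F (t, x) (1, 0)) t :=
  hF.hasFDerivAt.comp_hasDerivAt t ((hasDerivAt_id t).prodMk (hasDerivAt_const t x))

theorem hasDerivAt_fderiv_apply_x {F : ℝ × ℝ → ℝ} (hF : DifferentiableAt ℝ F (t, x)) :
    HasDerivAt (fun y => F (t, y)) (fderiv ℝ F (t, x) (0, 1)) x :=
  hF.hasFDerivAt.comp_hasDerivAt x ((hasDerivAt_const x t).prodMk (hasDerivAt_id x))

theorem pt_eq_fderiv (hf : DifferentiableAt ℝ (uncurry f) (t, x)) :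
    pt f t x = fderiv ℝ (uncurry f) (t, x) (1, 0) :=
  (hasDerivAt_fderiv_apply_t hf).deriv

theorem px_eq_fderiv (hf : DifferentiableAt ℝ (uncurry f) (t, x)) :
    px f t x = fderiv ℝ (uncurry f) (t, x) (0, 1) :=
  (hasDerivAt_fderiv_apply_x hf).deriv

theorem hasDerivAt_pt (hf : DifferentiableAt ℝ (uncurry f) (t, x)) :
    HasDerivAt (fun s => f s x) (pt f t x) t :=
  pt_eq_fderiv hf ▸ hasDerivAt_fderiv_apply_t hf

theorem hasDerivAt_px (hf : DifferentiableAt ℝ (uncurry f) (t, x)) :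
    HasDerivAt (fun y => f t y) (px f t x) x :=
  px_eq_fderiv hf ▸ hasDerivAt_fderiv_apply_x hf

theorem uncurry_pt (hf : Differentiable ℝ (uncurry f)) :
    uncurry (pt f) = fun p => fderiv ℝ (uncurry f) p (1, 0) :=
  funext fun _ => pt_eq_fderiv (hf _)

theorem uncurry_px (hf : Differentiable ℝ (uncurry f)) :
    uncurry (px f) = fun p => fderiv ℝ (uncurry f) p (0, 1) :=
  funext fun _ => px_eq_fderiv (hf _)

variable {n : WithTop ℕ∞}

theorem ContDiff.uncurry_pt (hf : ContDiff ℝ (n + 1) (uncurry f)) :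
    ContDiff ℝ n (uncurry (pt f)) := by
  rw [_root_.uncurry_pt (hf.differentiable (by simp))]
  exact (hf.fderiv_right le_rfl).clm_apply contDiff_const

theorem ContDiff.uncurry_px (hf : ContDiff ℝ (n + 1) (uncurry f)) :
    ContDiff ℝ n (uncurry (px f)) := by
  rw [_root_.uncurry_px (hf.differentiable (by simp))]
  exact (hf.fderiv_right le_rfl).clm_apply contDiff_const

theorem fderiv_fderiv_apply_const {F : ℝ × ℝ → ℝ} {p : ℝ × ℝ}
    (hF : DifferentiableAt ℝ (fderiv ℝ F) p) (v w : ℝ × ℝ) :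
    fderiv ℝ (fun q => fderiv ℝ F q v) p w = fderiv ℝ (fderiv ℝ F) p w v := by
  rw [fderiv_clm_apply hF (differentiableAt_const v)]
  simp

theorem pt_px (hf : ContDiff ℝ 2 (uncurry f)) (t x : ℝ) : pt (px f) t x = px (pt f) t x := by
  have hdf : Differentiable ℝ (uncurry f) := hf.differentiable (by simp)
  have hdf' : Differentiable ℝ (fderiv ℝ (uncurry f)) :=
    (hf.fderiv_right (m := 1) (by norm_num)).differentiable (by simp)
  have hpx : Differentiable ℝ (uncurry (px f)) := (hf.uncurry_px (n := 1)).differentiable (by simp)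
  have hpt : Differentiable ℝ (uncurry (pt f)) := (hf.uncurry_pt (n := 1)).differentiable (by simp)
  rw [pt_eq_fderiv (hpx _), px_eq_fderiv (hpt _), uncurry_px hdf, uncurry_pt hdf,
    fderiv_fderiv_apply_const (hdf' _), fderiv_fderiv_apply_const (hdf' _)]
  exact (hf.contDiffAt.isSymmSndFDerivAt (by simp)).eq _ _

theorem hasDerivAt_pt_partials (hf : ContDiff ℝ 2 (uncurry f)) (t x : ℝ) :
    HasDerivAt (fun s => f s x) (pt f t x) t ∧ HasDerivAt (fun s => pt f s x) (pt (pt f) t x) t ∧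
      HasDerivAt (fun s => px f s x) (pt (px f) t x) t :=
  ⟨hasDerivAt_pt (hf.differentiable (by simp) _),
    hasDerivAt_pt ((hf.uncurry_pt (n := 1)).differentiable (by simp) _),
    hasDerivAt_pt ((hf.uncurry_px (n := 1)).differentiable (by simp) _)⟩

theorem hasDerivAt_px_partials (hf : ContDiff ℝ 2 (uncurry f)) (t x : ℝ) :
    HasDerivAt (fun y => f t y) (px f t x) x ∧ HasDerivAt (fun y => pt f t y) (px (pt f) t x) x ∧
      HasDerivAt (fun y => px f t y) (px (px f) t x) x :=
  ⟨hasDerivAt_px (hf.differentiable (by simp) _),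
    hasDerivAt_px ((hf.uncurry_pt (n := 1)).differentiable (by simp) _),
    hasDerivAt_px ((hf.uncurry_px (n := 1)).differentiable (by simp) _)⟩

end PartialDerivatives

section ReducedEinstein

variable {Λ φ α : ℝ → ℝ → ℝ} {t x : ℝ}

theorem lambda_equation_expand (hΛ : ContDiff ℝ 2 (uncurry Λ)) (hα : ContDiff ℝ 1 (uncurry α))
    (heqΛ : pt (fun t x => α t x * pt Λ t x) t x - px (fun t x => α t x * px Λ t x) t x
      = 2 * α t x * sinh (2 * Λ t x) * (pt φ t x ^ 2 - px φ t x ^ 2)) :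
    pt α t x * pt Λ t x - px α t x * px Λ t x + α t x * (pt (pt Λ) t x - px (px Λ) t x)
      = 4 * α t x * sinh (Λ t x) * cosh (Λ t x) * (pt φ t x ^ 2 - px φ t x ^ 2) := by
  have hα' := hα.differentiable one_ne_zero (t, x)
  rw [show pt (fun t x => α t x * pt Λ t x) t x = _ from
      ((hasDerivAt_pt hα').mul (hasDerivAt_pt_partials hΛ t x).2.1).deriv,
    show px (fun t x => α t x * px Λ t x) t x = _ from
      ((hasDerivAt_px hα').mul (hasDerivAt_px_partials hΛ t x).2.2).deriv, sinh_two_mul] at heqΛ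
  linear_combination heqΛ

theorem phi_equation_expand (hφ : ContDiff ℝ 2 (uncurry φ)) (hΛ : ContDiff ℝ 1 (uncurry Λ))
    (hα : ContDiff ℝ 1 (uncurry α))
    (heqφ : pt (fun t x => α t x * sinh (Λ t x) ^ 2 * pt φ t x) t x
        - px (fun t x => α t x * sinh (Λ t x) ^ 2 * px φ t x) t x = 0) :
    sinh (Λ t x) * ((pt α t x * pt φ t x - px α t x * px φ t x) * sinh (Λ t x)
      + 2 * α t x * cosh (Λ t x) * (pt Λ t x * pt φ t x - px Λ t x * px φ t x)
      + α t x * sinh (Λ t x) * (pt (pt φ) t x - px (px φ) t x)) = 0 := by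
  have hα' := hα.differentiable one_ne_zero (t, x)
  have hΛ' := hΛ.differentiable one_ne_zero (t, x)
  rw [show pt (fun t x => α t x * sinh (Λ t x) ^ 2 * pt φ t x) t x = _ from
      (((hasDerivAt_pt hα').mul ((hasDerivAt_pt hΛ').sinh.pow 2)).mul
        (hasDerivAt_pt_partials hφ t x).2.1).deriv,
    show px (fun t x => α t x * sinh (Λ t x) ^ 2 * px φ t x) t x = _ from
      (((hasDerivAt_px hα').mul ((hasDerivAt_px hΛ').sinh.pow 2)).mul
        (hasDerivAt_px_partials hφ t x).2.2).deriv] at heqφ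
  simp only [Pi.mul_apply, Pi.pow_apply, Nat.cast_ofNat] at heqφ
  linear_combination heqφ

noncomputable def waveMapEnergy (Λ φ : ℝ → ℝ → ℝ) (t x : ℝ) : ℝ :=
  pt Λ t x ^ 2 + px Λ t x ^ 2 + 4 * sinh (Λ t x) ^ 2 * (pt φ t x ^ 2 + px φ t x ^ 2)

noncomputable def waveMapMomentum (Λ φ : ℝ → ℝ → ℝ) (t x : ℝ) : ℝ :=
  pt Λ t x * px Λ t x + 4 * sinh (Λ t x) ^ 2 * (pt φ t x * px φ t x)

theorem pt_eDen_add_px_pDen (hΛ : ContDiff ℝ 2 (uncurry Λ)) (hφ : ContDiff ℝ 2 (uncurry φ))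
    (hα : ContDiff ℝ 2 (uncurry α))
    (heqΛ : pt (fun t x => α t x * pt Λ t x) t x - px (fun t x => α t x * px Λ t x) t x
      = 2 * α t x * sinh (2 * Λ t x) * (pt φ t x ^ 2 - px φ t x ^ 2))
    (heqφ : pt (fun t x => α t x * sinh (Λ t x) ^ 2 * pt φ t x) t x
        - px (fun t x => α t x * sinh (Λ t x) ^ 2 * px φ t x) t x = 0)
    (heqα : pt (pt α) t x - px (px α) t x = 0)
    (hα0 : α t x ≠ 0) (hD : px α t x ^ 2 ≠ pt α t x ^ 2) :
    pt (eDen Λ φ α) t x + px (pDen Λ φ α) t x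
      = 4 * sinh (Λ t x) ^ 2 * (pt φ t x ^ 2 - px φ t x ^ 2) + pt Λ t x ^ 2 - px Λ t x ^ 2
        + px (fun t x => px α t x / α t x) t x - pt (fun t x => pt α t x / α t x) t x := by
  have hΛ_wave := lambda_equation_expand hΛ (hα.of_le one_le_two) heqΛ
  have hφ_wave := phi_equation_expand hφ (hΛ.of_le one_le_two) (hα.of_le one_le_two) heqφ
  obtain ⟨hα_t, hαt_t, hαx_t⟩ := hasDerivAt_pt_partials hα t x
  obtain ⟨hΛ_t, hΛt_t, hΛx_t⟩ := hasDerivAt_pt_partials hΛ t x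
  obtain ⟨-, hφt_t, hφx_t⟩ := hasDerivAt_pt_partials hφ t x
  obtain ⟨hα_x, hαt_x, hαx_x⟩ := hasDerivAt_px_partials hα t x
  obtain ⟨hΛ_x, hΛt_x, hΛx_x⟩ := hasDerivAt_px_partials hΛ t x
  obtain ⟨-, hφt_x, hφx_x⟩ := hasDerivAt_px_partials hφ t x
  have hD' : px α t x ^ 2 - pt α t x ^ 2 ≠ 0 := sub_ne_zero.mpr hD
  have hα2 : α t x ^ 2 ≠ 0 := pow_ne_zero 2 hα0
  have hκ_t := hα_t.div ((hαx_t.pow 2).sub (hαt_t.pow 2)) hD'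
  have hκ_x := hα_x.div ((hαx_x.pow 2).sub (hαt_x.pow 2)) hD'
  have hS_t := hΛ_t.sinh.pow 2
  have hS_x := hΛ_x.sinh.pow 2
  have hh1_t := (((((hαx_t.pow 2).div (hα_t.pow 2) hα2).add
      ((hαt_t.pow 2).div (hα_t.pow 2) hα2)).add (hΛt_t.pow 2)).add (hΛx_t.pow 2)).add
    ((hS_t.const_mul 4).mul ((hφt_t.pow 2).add (hφx_t.pow 2)))
  have hh1_x := (((((hαx_x.pow 2).div (hα_x.pow 2) hα2).add
      ((hαt_x.pow 2).div (hα_x.pow 2) hα2)).add (hΛt_x.pow 2)).add (hΛx_x.pow 2)).add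
    ((hS_x.const_mul 4).mul ((hφt_x.pow 2).add (hφx_x.pow 2)))
  have hh2_t := (((hαx_t.mul hαt_t).div (hα_t.pow 2) hα2).add (hΛt_t.mul hΛx_t)).add
    ((hS_t.const_mul 4).mul (hφt_t.mul hφx_t))
  have hh2_x := (((hαx_x.mul hαt_x).div (hα_x.pow 2) hα2).add (hΛt_x.mul hΛx_x)).add
    ((hS_x.const_mul 4).mul (hφt_x.mul hφx_x))
  rw [show pt (eDen Λ φ α) t x = _ from
      (hκ_t.mul ((hαt_t.mul hh1_t).sub ((hαx_t.const_mul 2).mul hh2_t))).deriv,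
    show px (pDen Λ φ α) t x = _ from
      (hκ_x.mul ((hαx_x.mul hh1_x).sub ((hαt_x.const_mul 2).mul hh2_x))).deriv,
    show pt (fun t x => pt α t x / α t x) t x = _ from (hαt_t.div hα_t hα0).deriv,
    show px (fun t x => px α t x / α t x) t x = _ from (hαx_x.div hα_x hα0).deriv,
    pt_px hα, pt_px hΛ, pt_px hφ]
  simp only [Pi.add_apply, Pi.sub_apply, Pi.mul_apply, Pi.div_apply, Pi.pow_apply, Nat.cast_ofNat]
  linear_combination (norm := (simp only [waveMapEnergy, waveMapMomentum]; field_simp; ring))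
    (2 * (pt α t x * pt Λ t x - px α t x * px Λ t x) / (px α t x ^ 2 - pt α t x ^ 2)) * hΛ_wave
    + (8 * (pt α t x * pt φ t x - px α t x * px φ t x) / (px α t x ^ 2 - pt α t x ^ 2)) * hφ_wave
    + (α t x * ((px α t x ^ 2 + pt α t x ^ 2) * waveMapEnergy Λ φ t x
        - 4 * pt α t x * px α t x * waveMapMomentum Λ φ t x) / (px α t x ^ 2 - pt α t x ^ 2) ^ 2)
      * heqα

end ReducedEinstein

/-- second modified continuity equation for the reduced
Einstein system. -/
theorem continuity_equation_two
    (Λ φ α : ℝ → ℝ → ℝ)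
    (hΛ : ContDiff ℝ 2 (fun p : ℝ × ℝ => Λ p.1 p.2))
    (hφ : ContDiff ℝ 2 (fun p : ℝ × ℝ => φ p.1 p.2))
    (hα : ContDiff ℝ 2 (fun p : ℝ × ℝ => α p.1 p.2))
    (heqΛ : ∀ t x,
      pt (fun t x => α t x * pt Λ t x) t x
        - px (fun t x => α t x * px Λ t x) t x
      = 2 * α t x * Real.sinh (2 * Λ t x) * ((pt φ t x) ^ 2 - (px φ t x) ^ 2))
    (heqφ : ∀ t x,
      pt (fun t x => α t x * Real.sinh (Λ t x) ^ 2 * pt φ t x) t x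
        - px (fun t x => α t x * Real.sinh (Λ t x) ^ 2 * px φ t x) t x = 0)
    (heqα : ∀ t x, pt (pt α) t x - px (px α) t x = 0)
    (hpos : ∀ t x, 0 < α t x)
    (hne : ∀ t x, (px α t x) ^ 2 ≠ (pt α t x) ^ 2) :
    ∀ t x, pt (eDen Λ φ α) t x + px (pDen Λ φ α) t x
      = 4 * Real.sinh (Λ t x) ^ 2 * ((pt φ t x) ^ 2 - (px φ t x) ^ 2)
        + (pt Λ t x) ^ 2 - (px Λ t x) ^ 2
        + px (fun t x => px α t x / α t x) t x
        - pt (fun t x => pt α t x / α t x) t x := fun t x =>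
  pt_eDen_add_px_pDen hΛ hφ hα (heqΛ t x) (heqφ t x) (heqα t x) (hpos t x).ne' (hne t x)
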